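/- Let X be a Markov chain with finite state space S and stationary distribution π. Then for any state y and any integer t > 0, P_π(τ(y) = t) ≤ 1/t, where P_π denotes the law of the chain whose initial state is sampled from π. In particular, for any state x with π(x) > 0, P_x(τ(y) = t) ≤ 1/(t·π(x)). -/

import Mathlib

open Finset

/-- A (row-)stochastic transition matrix: the transition kernel of a Markov chain
on the finite state space `S`. -/
def IsStochastic {S : Type*} [Fintype S] (p : Matrix S S ℝ) : Prop :=
  (∀ a b, 0 ≤ p a b) ∧ ∀ a, ∑ b, p a b = 1

/-- `π` is a stationary distribution for the transition matrix `p`. -/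
def IsStationaryDistribution {S : Type*} [Fintype S] (p : Matrix S S ℝ) (π : S → ℝ) : Prop :=
  (∀ a, 0 ≤ π a) ∧ (∑ a, π a = 1) ∧ ∀ b, ∑ a, π a * p a b = π b

/-- The chain with transition matrix `p` is reversible with respect to `π`. -/
def IsReversible {S : Type*} [Fintype S] (p : Matrix S S ℝ) (π : S → ℝ) : Prop :=
  ∀ a b, π a * p a b = π b * p b a

/-- The probability weight of a finite trajectory `z 0, z 1, …, z m` of the chain. -/
noncomputable def pathWeight {S : Type*} (p : Matrix S S ℝ) {m : ℕ} (z : Fin (m + 1) → S) : ℝ :=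
  ∏ i : Fin m, p (z i.castSucc) (z i.succ)

open scoped Classical in
/-- `P_x(A)` for an event `A` depending on the trajectory `X_0, X_1, …, X_m`
of the chain started at `x`. -/
noncomputable def eventProb {S : Type*} [Fintype S] (p : Matrix S S ℝ) (x : S) (m : ℕ)
    (A : (Fin (m + 1) → S) → Prop) : ℝ :=
  ∑ z : Fin (m + 1) → S, if z 0 = x ∧ A z then pathWeight p z else 0

/-- `P_x(τ(y) = t)`: the probability that the chain started at `x` first visits `y`
exactly at time `t`. -/
noncomputable def hitProbEq {S : Type*} [Fintype S] (p : Matrix S S ℝ) (x y : S) (t : ℕ) : ℝ :=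
  eventProb p x t fun z => z (Fin.last t) = y ∧ ∀ i : Fin (t + 1), (i : ℕ) < t → z i ≠ y

/-
By first-step analysis, `h t x := P_x(τ(y) = t)` satisfies `h (t + 1) x = 1[x ≠ y] ∑ b, p x b * h t b`.
Averaging against `π`, dropping the indicator and using stationarity shows that
`t ↦ P_π(τ(y) = t)` is non-increasing. The events `{τ(y) = s}` for `s ≤ t` are disjoint, so
`(t + 1) P_π(τ(y) = t) ≤ ∑_{s ≤ t} P_π(τ(y) = s) ≤ 1`.
-/

lemma pathWeight_cons {S : Type*} (p : Matrix S S ℝ) {m : ℕ} (a : S) (w : Fin (m + 1) → S) :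
    pathWeight p (Fin.cons a w : Fin (m + 2) → S) = p a (w 0) * pathWeight p w := by
  rw [pathWeight, Fin.prod_univ_succ]
  rfl

section FirstStep

variable {S : Type*} [Fintype S] (p : Matrix S S ℝ)

lemma eventProb_nonneg (hp : ∀ a b, 0 ≤ p a b) (x : S) (m : ℕ)
    (A : (Fin (m + 1) → S) → Prop) : 0 ≤ eventProb p x m A :=
  sum_nonneg fun _ _ => by
    split_ifs
    exacts [prod_nonneg fun _ _ => hp _ _, le_rfl]

lemma eventProb_succ (x : S) (m : ℕ) (A : (Fin (m + 2) → S) → Prop) :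
    eventProb p x (m + 1) A =
      ∑ b, p x b * eventProb p b m fun w => A (Fin.cons x w) := by
  classical
  unfold eventProb
  rw [← (Fin.consEquiv fun _ => S).sum_comp, Fintype.sum_prod_type]
  simp only [Fin.consEquiv, Equiv.coe_fn_mk, Fin.cons_zero, pathWeight_cons, ite_and, mul_sum]
  rw [sum_comm, sum_comm (γ := S)]
  simp

lemma eventProb_zero (x : S) (A : (Fin 1 → S) → Prop) [DecidablePred A] :
    eventProb p x 0 A = if A fun _ => x then 1 else 0 := by
  have h_const : ∀ z : Fin 1 → S, z 0 = x → z = fun _ => x := fun z hz =>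
    funext fun i => by rw [Fin.fin_one_eq_zero i, hz]
  unfold eventProb
  rw [Fintype.sum_eq_single (fun _ => x) fun z hz => if_neg fun h => hz (h_const z h.1)]
  simp [pathWeight]

variable (x y : S)

lemma hitProbEq_nonneg (hp : ∀ a b, 0 ≤ p a b) (t : ℕ) : 0 ≤ hitProbEq p x y t :=
  eventProb_nonneg p hp x t _

lemma hitProbEq_zero [DecidableEq S] : hitProbEq p x y 0 = if x = y then 1 else 0 := by
  rw [hitProbEq, eventProb_zero]
  simp

lemma hitProbEq_succ [DecidableEq S] (t : ℕ) :
    hitProbEq p x y (t + 1) = if x = y then 0 else ∑ b, p x b * hitProbEq p b y t := by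
  rw [hitProbEq, eventProb_succ]
  have h_event : ∀ w : Fin (t + 1) → S,
      ((Fin.cons x w : Fin (t + 2) → S) (Fin.last (t + 1)) = y ∧
        ∀ i : Fin (t + 2), (i : ℕ) < t + 1 → (Fin.cons x w : Fin (t + 2) → S) i ≠ y) ↔
      x ≠ y ∧ (w (Fin.last t) = y ∧ ∀ i : Fin (t + 1), (i : ℕ) < t → w i ≠ y) := by
    intro w
    rw [← Fin.succ_last, Fin.cons_succ, Fin.forall_fin_succ]
    simp only [Fin.cons_zero, Fin.cons_succ, Fin.val_zero, Fin.val_succ, Nat.add_lt_add_iff_right,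
      Nat.zero_lt_succ, forall_const]
    tauto
  simp_rw [h_event]
  split_ifs with hxy
  · simp [hxy, eventProb]
  · simp [hxy, hitProbEq]

lemma sum_range_hitProbEq_le_one (hp : IsStochastic p) (t : ℕ) :
    ∑ s ∈ range (t + 1), hitProbEq p x y s ≤ 1 := by
  classical
  induction t generalizing x with
  | zero => simp only [zero_add, sum_range_one, hitProbEq_zero]; split_ifs <;> norm_num
  | succ t ih =>
    rw [sum_range_succ', hitProbEq_zero]
    simp_rw [hitProbEq_succ]
    split_ifs with hxy
    · simp
    · calc ∑ s ∈ range (t + 1), ∑ b, p x b * hitProbEq p b y s + 0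
          = ∑ b, p x b * ∑ s ∈ range (t + 1), hitProbEq p b y s := by
            rw [add_zero, sum_comm]
            simp_rw [mul_sum]
        _ ≤ ∑ b, p x b * 1 := by gcongr with b; exacts [hp.1 x b, ih b]
        _ = 1 := by simp [hp.2 x]

end FirstStep

section Stationary

variable {S : Type*} [Fintype S] (p : Matrix S S ℝ) (π : S → ℝ) (y : S)

lemma sum_mul_hitProbEq_succ_le (hp : ∀ a b, 0 ≤ p a b) (hπ : IsStationaryDistribution p π)
    (t : ℕ) : ∑ x, π x * hitProbEq p x y (t + 1) ≤ ∑ x, π x * hitProbEq p x y t := by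
  classical
  calc ∑ x, π x * hitProbEq p x y (t + 1)
      ≤ ∑ x, π x * ∑ b, p x b * hitProbEq p b y t := by
        refine sum_le_sum fun x _ => mul_le_mul_of_nonneg_left ?_ (hπ.1 x)
        rw [hitProbEq_succ]
        split_ifs
        exacts [sum_nonneg fun b _ => mul_nonneg (hp x b) (hitProbEq_nonneg p b y hp t), le_rfl]
    _ = ∑ b, (∑ x, π x * p x b) * hitProbEq p b y t := by
        simp_rw [mul_sum, sum_mul, mul_assoc]
        exact sum_comm
    _ = ∑ x, π x * hitProbEq p x y t := by simp_rw [hπ.2.2]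

lemma sum_mul_hitProbEq_le (hp : IsStochastic p) (hπ : IsStationaryDistribution p π) (t : ℕ) :
    ∑ x, π x * hitProbEq p x y t ≤ 1 / (t + 1) := by
  have h_anti : Antitone fun s => ∑ x, π x * hitProbEq p x y s :=
    antitone_nat_of_succ_le (sum_mul_hitProbEq_succ_le p π y hp.1 hπ)
  rw [le_div_iff₀ (by positivity), mul_comm]
  calc (t + 1 : ℝ) * ∑ x, π x * hitProbEq p x y t
      = ∑ s ∈ range (t + 1), ∑ x, π x * hitProbEq p x y t := by simp
    _ ≤ ∑ s ∈ range (t + 1), ∑ x, π x * hitProbEq p x y s :=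
        sum_le_sum fun s hs => h_anti (Nat.lt_succ_iff.1 (mem_range.1 hs))
    _ = ∑ x, π x * ∑ s ∈ range (t + 1), hitProbEq p x y s := by
        simp_rw [mul_sum]
        exact sum_comm
    _ ≤ ∑ x, π x * 1 := by
        gcongr with x
        exacts [hπ.1 x, sum_range_hitProbEq_le_one p x y hp t]
    _ = 1 := by simp [hπ.2.1]

end Stationary

/-- Proposition 5: for a chain with stationary distribution `π`, `P_π(τ(y) = t) ≤ 1/t`
for every `t > 0`; in particular `P_x(τ(y) = t) ≤ 1/(t π(x))` whenever `π x > 0`. -/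
theorem stationary_surprise_bound {S : Type*} [Fintype S] (p : Matrix S S ℝ) (π : S → ℝ)
    (hp : IsStochastic p) (hstat : IsStationaryDistribution p π) (y : S) (t : ℕ) (ht : 0 < t) :
    (∑ x, π x * hitProbEq p x y t) ≤ 1 / t ∧
      ∀ x : S, 0 < π x → hitProbEq p x y t ≤ 1 / (t * π x) := by
  have ht' : (0 : ℝ) < t := Nat.cast_pos.2 ht
  have h_stat : ∑ x, π x * hitProbEq p x y t ≤ 1 / t :=
    (sum_mul_hitProbEq_le p π y hp hstat t).trans
      (one_div_le_one_div_of_le ht' (le_add_of_nonneg_right zero_le_one))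
  refine ⟨h_stat, fun x hx => ?_⟩
  have h_single : π x * hitProbEq p x y t ≤ 1 / t :=
    (single_le_sum (fun b _ => mul_nonneg (hstat.1 b) (hitProbEq_nonneg p b y hp.1 t))
      (mem_univ x)).trans h_stat
  rw [le_div_iff₀ ht'] at h_single
  rw [le_div_iff₀ (mul_pos ht' hx)]
  linarith
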